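/- Let n ≥ 2 and view 𝒢_n as a simple graph. A nonempty independent set T ⊆ V(𝒢_n) is a fundamental set of 𝒢_n if and only if either T = {w}, or T = {u_1, …, u_n} where u_i ∈ {u_i^{(1)}, u_i^{(2)}} for each 1 ≤ i ≤ n. -/
import Mathlib


/-- The graph `𝒢ₙ` on the vertex set `{w} ∪ {uᵢ⁽¹⁾, uᵢ⁽²⁾ : 1 ≤ i ≤ n}`
(identified with `Option (Fin n × Fin 2)`, `none = w`, `some (i,0) = uᵢ⁽¹⁾`,
`some (i,1) = uᵢ⁽²⁾`), with edges `xᵢ = {w, uᵢ⁽¹⁾}`, `yᵢ = {w, uᵢ⁽²⁾}`,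
`zᵢ = {uᵢ⁽¹⁾, uᵢ⁽²⁾}`. -/
def Gn (n : ℕ) : SimpleGraph (Option (Fin n × Fin 2)) :=
  SimpleGraph.fromRel (fun a b => ∃ i : Fin n,
    (a = none ∧ ∃ t : Fin 2, b = some (i, t)) ∨ (a = some (i, 0) ∧ b = some (i, 1)))

/-- The neighbourhood `N_G(T) = ⋃_{t ∈ T} {v : {t,v} ∈ E(G)}`. -/
def nbhd {V : Type*} (G : SimpleGraph V) (T : Set V) : Set V :=
  {v | ∃ t ∈ T, G.Adj t v}

/-- Every connected component of `G` contains an odd cycle (equivalently, is not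
bipartite): every vertex can reach a vertex carrying an odd cycle. -/
def EveryComponentHasOddCycle {V : Type*} (G : SimpleGraph V) : Prop :=
  ∀ v : V, ∃ (u : V) (c : G.Walk u u), G.Reachable v u ∧ c.IsCycle ∧ Odd c.length

/-- `T` is a fundamental set of `G`: (a) the bipartite graph on `T ∪ N_G(T)` with
edge set `{{v,w} : v ∈ T, w ∈ N_G(T)} ∩ E(G)` is connected, and (b) either
`T ∪ N_G(T) = V(G)` or every connected component of `G \ (T ∪ N_G(T))` contains an
odd cycle. -/
def IsFundamental {V : Type*} (G : SimpleGraph V) (T : Set V) : Prop :=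
  ((SimpleGraph.fromRel fun a b => G.Adj a b ∧ a ∈ T ∧ b ∈ nbhd G T).induce
      (T ∪ nbhd G T)).Connected ∧
  (T ∪ nbhd G T = Set.univ ∨
    EveryComponentHasOddCycle (G.induce (T ∪ nbhd G T)ᶜ))

open SimpleGraph

lemma gn_adj_none_some {n : ℕ} (p : Fin n × Fin 2) : (Gn n).Adj none (some p) :=
  ⟨by simp, Or.inl ⟨p.1, Or.inl ⟨rfl, p.2, rfl⟩⟩⟩

lemma gn_adj_some_some {n : ℕ} (p q : Fin n × Fin 2) :
    (Gn n).Adj (some p) (some q) ↔ p.1 = q.1 ∧ p.2 ≠ q.2 := by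
  constructor
  · rintro ⟨hne, (⟨i, (⟨h,_⟩|⟨h1,h2⟩)⟩|⟨i, (⟨h,_⟩|⟨h1,h2⟩)⟩)⟩ <;> simp_all
  · rintro ⟨h1, h2⟩
    have hne : some p ≠ some q := by
      intro h; exact h2 (congrArg Prod.snd (Option.some.inj h))
    refine ⟨hne, ?_⟩
    obtain ⟨i, s⟩ := p; obtain ⟨j, t⟩ := q
    simp only at h1 h2; subst h1
    fin_cases s <;> fin_cases t <;> simp_all

lemma gn_adj_some_some' {n : ℕ} (p q : Fin n × Fin 2) (h1 : p.1 = q.1) (h2 : p.2 ≠ q.2) :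
    (Gn n).Adj (some p) (some q) := (gn_adj_some_some p q).mpr ⟨h1, h2⟩

lemma zmod2_sub_of_ne {x y : ZMod 2} (h : x ≠ y) : x - y = 1 := by
  revert h; revert x y; decide

lemma walk_parity {V : Type*} {G : SimpleGraph V} (f : V → ZMod 2)
    (hf : ∀ a b, G.Adj a b → f a ≠ f b) {u v : V} (p : G.Walk u v) :
    (p.length : ZMod 2) = f v - f u := by
  induction p with
  | nil => simp
  | @cons a b c h q ih =>
    have h1 : f b - f a = 1 := zmod2_sub_of_ne (hf a b h).symm
    rw [SimpleGraph.Walk.length_cons, Nat.cast_add, Nat.cast_one, ih]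
    linear_combination -h1

lemma induce_adj' {V : Type*} (G : SimpleGraph V) (s : Set V) (a b : s)
    (h : G.Adj a.1 b.1) : (G.induce s).Adj a b := h

/-- A nonempty independent set `T ⊆ V(𝒢ₙ)` is fundamental iff `T = {w}` or
`T = {u₁, …, uₙ}` with `uᵢ ∈ {uᵢ⁽¹⁾, uᵢ⁽²⁾}` for each `i`. -/
theorem stmt_12 (n : ℕ) (hn : 2 ≤ n) (T : Set (Option (Fin n × Fin 2)))
    (hT : T.Nonempty) (hind : ∀ a ∈ T, ∀ b ∈ T, ¬ (Gn n).Adj a b) :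
    IsFundamental (Gn n) T ↔
      (T = {none} ∨ ∃ u : Fin n → Fin 2, T = Set.range fun i => some (i, u i)) := by
  constructor
  · rintro ⟨hconn, hb⟩
    by_cases hw : none ∈ T
    · left
      ext v
      constructor
      · intro hv
        by_contra hne
        simp only [Set.mem_singleton_iff] at hne
        obtain ⟨p, rfl⟩ := Option.ne_none_iff_exists'.mp hne
        exact hind none hw _ hv (gn_adj_none_some p)
      · rintro rfl; exact hw
    · have hTsome : ∀ v ∈ T, ∃ p : Fin n × Fin 2, v = some p := by
        intro v hv
        cases v with
        | none => exact absurd hv hw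
        | some p => exact ⟨p, rfl⟩
      have hnoneN : none ∈ nbhd (Gn n) T := by
        obtain ⟨v, hv⟩ := hT
        obtain ⟨p, rfl⟩ := hTsome v hv
        exact ⟨some p, hv, (gn_adj_none_some p).symm⟩
      have hcov : ∀ i : Fin n, ∃ t : Fin 2, some (i, t) ∈ T := by
        intro j
        by_contra hj
        push_neg at hj
        have hnot : ∀ t : Fin 2, some (j, t) ∉ T ∪ nbhd (Gn n) T := by
          intro t ht
          rcases ht with ht | ⟨a, ha, hadj⟩
          · exact hj t ht
          · obtain ⟨p, rfl⟩ := hTsome a ha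
            obtain ⟨h1, h2⟩ := (gn_adj_some_some p (j, t)).mp hadj
            obtain ⟨i, s⟩ := p
            simp only at h1; subst h1
            exact hj s ha
        rcases hb with hb | hb
        · exact hnot 0 (by rw [hb]; trivial)
        · obtain ⟨u, c, hr, hc, hodd⟩ := hb ⟨some (j, 0), hnot 0⟩
          set f : ((T ∪ nbhd (Gn n) T)ᶜ : Set _) → ZMod 2 := fun x =>
            match x.1 with
            | none => 0
            | some p => if p.2 = 0 then 0 else 1 with hfdef
          have hf : ∀ a b, ((Gn n).induce (T ∪ nbhd (Gn n) T)ᶜ).Adj a b → f a ≠ f b := by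
            rintro ⟨a, ha⟩ ⟨b, hb'⟩ hadj
            have hadj' : (Gn n).Adj a b := hadj
            have hanone : a ≠ none := by
              rintro rfl; exact ha (Or.inr hnoneN)
            have hbnone : b ≠ none := by
              rintro rfl; exact hb' (Or.inr hnoneN)
            obtain ⟨p, rfl⟩ := Option.ne_none_iff_exists'.mp hanone
            obtain ⟨q, rfl⟩ := Option.ne_none_iff_exists'.mp hbnone
            obtain ⟨h1, h2⟩ := (gn_adj_some_some p q).mp hadj'
            obtain ⟨i, s⟩ := p; obtain ⟨i', t⟩ := q
            simp only at h2
            have e1 : f ⟨some (i, s), ha⟩ = if s = 0 then 0 else 1 := rfl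
            have e2 : f ⟨some (i', t), hb'⟩ = if t = 0 then 0 else 1 := rfl
            rw [e1, e2]
            fin_cases s <;> fin_cases t <;> simp_all
          have hpar := walk_parity f hf c
          rw [sub_self] at hpar
          rw [← ZMod.natCast_mod c.length 2, Nat.odd_iff.mp hodd] at hpar
          exact one_ne_zero hpar
      choose u hu using hcov
      right
      refine ⟨u, ?_⟩
      ext v
      constructor
      · intro hv
        obtain ⟨⟨i, s⟩, rfl⟩ := hTsome v hv
        have : s = u i := by
          by_contra hs
          exact hind _ hv _ (hu i) ((gn_adj_some_some (i, s) (i, u i)).mpr ⟨rfl, hs⟩)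
        exact ⟨i, by rw [this]⟩
      · rintro ⟨i, rfl⟩; exact hu i
  · rintro (rfl | ⟨u, rfl⟩)
    · have huniv : ({none} : Set (Option (Fin n × Fin 2))) ∪ nbhd (Gn n) {none} = Set.univ := by
        ext v
        simp only [Set.mem_univ, iff_true]
        cases v with
        | none => exact Or.inl rfl
        | some p => exact Or.inr ⟨none, rfl, gn_adj_none_some p⟩
      refine ⟨?_, Or.inl huniv⟩
      set T : Set (Option (Fin n × Fin 2)) := {none} with hTdef
      have hnu : none ∈ T ∪ nbhd (Gn n) T := Or.inl rfl
      rw [connected_iff]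
      refine ⟨?_, ⟨(⟨none, hnu⟩ : ↑(T ∪ nbhd (Gn n) T))⟩⟩
      have key : ∀ x : ↑(T ∪ nbhd (Gn n) T),
          (((SimpleGraph.fromRel fun a b => (Gn n).Adj a b ∧ a ∈ T ∧ b ∈ nbhd (Gn n) T)).induce
            (T ∪ nbhd (Gn n) T)).Reachable x (⟨none, hnu⟩ : ↑(T ∪ nbhd (Gn n) T)) := by
        rintro ⟨v, hv⟩
        cases v with
        | none =>
          have : (⟨none, hv⟩ : ↑(T ∪ nbhd (Gn n) T)) = (⟨none, hnu⟩ : ↑(T ∪ nbhd (Gn n) T)) :=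
            Subtype.ext rfl
          rw [this]
        | some p =>
          refine Adj.reachable (induce_adj' _ _ _ _ ?_)
          exact ⟨by simp, Or.inr ⟨gn_adj_none_some p, rfl, ⟨none, rfl, gn_adj_none_some p⟩⟩⟩
      intro x y
      exact (key x).trans (key y).symm
    · set T : Set (Option (Fin n × Fin 2)) := Set.range fun i => some (i, u i) with hTdef
      have i0 : Fin n := ⟨0, by omega⟩
      have hnN : none ∈ nbhd (Gn n) T :=
        ⟨some (i0, u i0), ⟨i0, rfl⟩, (gn_adj_none_some (i0, u i0)).symm⟩
      have huniv : T ∪ nbhd (Gn n) T = Set.univ := by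
        ext v
        simp only [Set.mem_univ, iff_true]
        cases v with
        | none => exact Or.inr hnN
        | some p =>
          obtain ⟨i, s⟩ := p
          by_cases hs : s = u i
          · exact Or.inl ⟨i, by rw [hs]⟩
          · exact Or.inr ⟨some (i, u i), ⟨i, rfl⟩,
              gn_adj_some_some' (i, u i) (i, s) rfl (Ne.symm hs)⟩
      refine ⟨?_, Or.inl huniv⟩
      have hnu : none ∈ T ∪ nbhd (Gn n) T := Or.inr hnN
      rw [connected_iff]
      refine ⟨?_, ⟨(⟨none, hnu⟩ : ↑(T ∪ nbhd (Gn n) T))⟩⟩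
      have key : ∀ x : ↑(T ∪ nbhd (Gn n) T),
          (((SimpleGraph.fromRel fun a b => (Gn n).Adj a b ∧ a ∈ T ∧ b ∈ nbhd (Gn n) T)).induce
            (T ∪ nbhd (Gn n) T)).Reachable x (⟨none, hnu⟩ : ↑(T ∪ nbhd (Gn n) T)) := by
        rintro ⟨v, hv⟩
        cases v with
        | none =>
          have : (⟨none, hv⟩ : ↑(T ∪ nbhd (Gn n) T)) = (⟨none, hnu⟩ : ↑(T ∪ nbhd (Gn n) T)) :=
            Subtype.ext rfl
          rw [this]
        | some p =>
          obtain ⟨i, s⟩ := p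
          have hreach : ∀ hv', (((SimpleGraph.fromRel fun a b =>
              (Gn n).Adj a b ∧ a ∈ T ∧ b ∈ nbhd (Gn n) T)).induce
              (T ∪ nbhd (Gn n) T)).Reachable ⟨some (i, u i), hv'⟩
              (⟨none, hnu⟩ : ↑(T ∪ nbhd (Gn n) T)) := by
            intro hv'
            refine Adj.reachable (induce_adj' _ _ _ _ ?_)
            exact ⟨by simp, Or.inl ⟨(gn_adj_none_some (i, u i)).symm, ⟨i, rfl⟩, hnN⟩⟩
          by_cases hs : s = u i
          · subst hs; exact hreach hv
          · refine Reachable.trans (Adj.reachable (induce_adj' _ _ ⟨some (i,s), hv⟩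
              ⟨some (i, u i), Or.inl ⟨i, rfl⟩⟩ ?_)) (hreach _)
            refine ⟨?_, Or.inr ⟨gn_adj_some_some' (i, u i) (i, s) rfl (Ne.symm hs), ⟨i, rfl⟩,
              ⟨some (i, u i), ⟨i, rfl⟩, gn_adj_some_some' (i, u i) (i, s) rfl (Ne.symm hs)⟩⟩⟩
            simp [hs]
      intro x y
      exact (key x).trans (key y).symm
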